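/- Let p > 2 be odd and L = {w ∈ {0,1}^n : bin(w) ≡ 0 (mod p)}. Then every regular expression describing L has length at least Ω(n^{−1}·p^{log₂(n/log₂ p) − 2}). -/

import Mathlib

inductive RE (α : Type) : Type where
  | eps : RE α
  | char : α → RE α
  | union : RE α → RE α → RE α
  | cat : RE α → RE α → RE α

namespace RE
variable {α : Type}

/-- The language described by a star-free regular expression. -/
def lang : RE α → Language α
  | eps => 1
  | char a => {[a]}
  | union r s => r.lang + s.lang
  | cat r s => r.lang * s.lang

/-- Reverse polish length: the number of nodes of the syntax tree. -/
def size : RE α → ℕ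
  | eps => 1
  | char _ => 1
  | union r s => r.size + s.size + 1
  | cat r s => r.size + s.size + 1

/-- `r` is homogeneous of degree `d`: every described word has length `d`. -/
def Homog (r : RE α) (d : ℕ) : Prop := ∀ w ∈ r.lang, w.length = d

/-- Log-product expressions. -/
inductive LogProd : RE α → Prop where
  | char (a : α) : LogProd (char a)
  | catL {B₁ B₂ : RE α} {d₁ d₂ : ℕ} : LogProd B₁ → B₁.Homog d₁ → B₂.Homog d₂ →
      d₂ ≤ d₁ → LogProd (cat B₁ B₂)
  | catR {B₁ B₂ : RE α} {d₁ d₂ : ℕ} : LogProd B₁ → B₁.Homog d₁ → B₂.Homog d₂ →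
      d₂ ≤ d₁ → LogProd (cat B₂ B₁)

end RE

/-- The value of a binary word, most significant bit leftmost; `binVal [] = 0`. -/
def binVal (w : List Bool) : ℕ :=
  w.foldl (fun acc b => 2 * acc + (if b then 1 else 0)) 0

/-!
Every star-free expression whose words all have length `n ≥ 1` describes the union of at most
`size` log-products contained in its language, so it suffices to count the words of one
log-product `P ⊆ L`. Since `2` is invertible modulo the odd `p`, all words of each factor of `P`
lie in one residue class, so a factor of length `e` has at most `2 ^ e / p + 1` words. Counting
the long factors (`2 ^ e ≥ p`) and the total length of the others gives `|P| * T ≤ 2 ^ n / p`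
for the claimed bound `T`, while `L` has at least `2 ^ n / p` words.
-/

lemma Set.ncard_image2_le {α β γ : Type*} (f : α → β → γ) {s : Set α} {t : Set β}
    (hs : s.Finite) (ht : t.Finite) : (Set.image2 f s t).ncard ≤ s.ncard * t.ncard := by
  rw [← Set.image_uncurry_prod, ← Set.ncard_prod]
  exact Set.ncard_image_le (hs.prod ht)

lemma List.ncard_le_length_mul {ι β : Type*} {S : Set β} (f : ι → Set β) {l : List ι} {M : ℝ}
    (hfin : ∀ i ∈ l, (f i).Finite) (hM : ∀ i ∈ l, ((f i).ncard : ℝ) ≤ M)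
    (hS : ∀ x ∈ S, ∃ i ∈ l, x ∈ f i) : (S.ncard : ℝ) ≤ l.length * M := by
  induction l generalizing S with
  | nil => simp [Set.eq_empty_of_forall_notMem fun x hx => by simpa using hS x hx]
  | cons i l ih =>
    have hdiff : ∀ x ∈ S \ f i, ∃ j ∈ l, x ∈ f j := fun x hx => by
      obtain ⟨j, hj, hxj⟩ := hS x hx.1
      rcases List.mem_cons.1 hj with rfl | hj
      · exact absurd hxj hx.2
      · exact ⟨j, hj, hxj⟩
    have hinter : ((S ∩ f i).ncard : ℝ) ≤ (f i).ncard := by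
      exact_mod_cast Set.ncard_le_ncard Set.inter_subset_right (hfin i (List.mem_cons_self ..))
    have hunion : (S.ncard : ℝ) ≤ (S ∩ f i).ncard + (S \ f i).ncard := by
      exact_mod_cast Set.inter_union_sdiff S (f i) ▸ Set.ncard_union_le _ _
    have hrest := ih (fun j hj => hfin j (List.mem_cons_of_mem _ hj))
      (fun j hj => hM j (List.mem_cons_of_mem _ hj)) hdiff
    have hi := hM i (List.mem_cons_self ..)
    push_cast [List.length_cons]
    linarith

lemma Real.logb_two_le_two_mul {z : ℝ} (hz : 0 < z) : Real.logb 2 z ≤ 2 * z := by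
  rw [Real.logb, div_le_iff₀ (Real.log_pos one_lt_two)]
  nlinarith [Real.log_le_sub_one_of_pos hz, Real.log_two_gt_d9]

lemma foldl_binVal (a : ℕ) (w : List Bool) :
    w.foldl (fun acc b => 2 * acc + (if b then 1 else 0)) a = a * 2 ^ w.length + binVal w := by
  induction w generalizing a with
  | nil => simp [binVal]
  | cons b t ih =>
    rw [List.foldl_cons, ih, List.length_cons, show binVal (b :: t) = _ from ih _]
    ring

lemma binVal_append (u v : List Bool) :
    binVal (u ++ v) = binVal u * 2 ^ v.length + binVal v := by
  rw [binVal, List.foldl_append, foldl_binVal]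
  rfl

lemma binVal_cons (b : Bool) (w : List Bool) :
    binVal (b :: w) = (if b then 1 else 0) * 2 ^ w.length + binVal w := by
  simpa [binVal] using binVal_append [b] w

lemma binVal_lt (w : List Bool) : binVal w < 2 ^ w.length := by
  induction w with
  | nil => simp [binVal]
  | cons b t ih =>
    rw [binVal_cons, List.length_cons, pow_succ]
    cases b <;> simp <;> omega

lemma binVal_injOn (d : ℕ) : Set.InjOn binVal {w | w.length = d} := by
  induction d with
  | zero => simp_all [Set.InjOn]
  | succ d ih =>
    rintro (_ | ⟨a, u⟩) hu (_ | ⟨b, v⟩) hv huv <;> simp only [Set.mem_ofPred_eq,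
      List.length_cons, List.length_nil, Nat.add_right_cancel_iff,
      Nat.zero_ne_add_one] at hu hv
    rw [binVal_cons, binVal_cons, hu, hv] at huv
    have hu' := hu ▸ binVal_lt u
    have hv' := hv ▸ binVal_lt v
    obtain rfl : a = b := by by_contra hab; cases a <;> cases b <;> simp at hab huv <;> omega
    rw [ih hu hv (by omega)]

def binWord : ℕ → ℕ → List Bool
  | 0, _ => []
  | d + 1, m => binWord d (m / 2) ++ [m % 2 == 1]

lemma length_binWord (d m : ℕ) : (binWord d m).length = d := by
  induction d generalizing m with
  | zero => rfl
  | succ d ih => simp [binWord, ih]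

lemma binVal_binWord {d m : ℕ} (h : m < 2 ^ d) : binVal (binWord d m) = m := by
  induction d generalizing m with
  | zero => simp_all [binWord, binVal]
  | succ d ih =>
    rw [binWord, binVal_append, ih (by omega)]
    rcases Nat.mod_two_eq_zero_or_one m with h | h <;> simp [h, binVal] <;> omega

def residueWords (p d : ℕ) (c : ZMod p) : Set (List Bool) :=
  {w | w.length = d ∧ (binVal w : ZMod p) = c}

lemma ncard_residueWords (p d : ℕ) [NeZero p] (c : ZMod p) :
    (residueWords p d c).ncard = (2 ^ d).count (· ≡ c.val [MOD p]) := by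
  have himage : binVal '' residueWords p d c = {m | m < 2 ^ d ∧ m ≡ c.val [MOD p]} := by
    ext m
    simp only [Set.mem_image, residueWords, Set.mem_ofPred_eq]
    rw [← ZMod.natCast_eq_natCast_iff, ZMod.natCast_zmod_val]
    constructor
    · rintro ⟨w, ⟨rfl, hw⟩, rfl⟩
      exact ⟨binVal_lt w, hw⟩
    · rintro ⟨hm, hmc⟩
      exact ⟨binWord d m, ⟨length_binWord d m, by rwa [binVal_binWord hm]⟩, binVal_binWord hm⟩
  rw [← ((binVal_injOn d).mono fun w hw => hw.1).ncard_image, himage,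
    Nat.count_eq_card_filter_range, ← Set.ncard_coe_finset]
  congr 1
  ext m
  simp

lemma ncard_residueWords_le (p d : ℕ) [NeZero p] (c : ZMod p) :
    (residueWords p d c).ncard ≤ 2 ^ d / p + 1 := by
  rw [ncard_residueWords, Nat.count_modEq_card _ (Nat.pos_of_neZero p)]
  split_ifs <;> omega

lemma div_le_ncard_residueWords_zero (p d : ℕ) [NeZero p] :
    (2 : ℝ) ^ d / p ≤ (residueWords p d 0).ncard := by
  have hcount := Nat.count_modEq_card_eq_ceil (2 ^ d) (Nat.pos_of_neZero p) 0
  rw [← ZMod.val_zero (n := p), ← ncard_residueWords, ZMod.val_zero, Nat.zero_mod,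
    Nat.cast_zero, sub_zero] at hcount
  have hceil : ((2 ^ d : ℕ) : ℚ) / p ≤ (residueWords p d 0).ncard := by
    exact_mod_cast hcount ▸ Int.le_ceil _
  have hreal := (Rat.cast_le (K := ℝ)).2 hceil
  push_cast at hreal
  exact hreal

lemma binVal_cast_eq_of_append {p : ℕ} (hp : Odd p) {A B : Set (List Bool)} {e : ℕ}
    (hB : ∀ v ∈ B, v.length = e) {c : ZMod p}
    (h : ∀ u ∈ A, ∀ v ∈ B, (binVal (u ++ v) : ZMod p) = c) {u₀ v₀ : List Bool}
    (hu₀ : u₀ ∈ A) (hv₀ : v₀ ∈ B) :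
    (∀ u ∈ A, (binVal u : ZMod p) = binVal u₀) ∧ ∀ v ∈ B, (binVal v : ZMod p) = binVal v₀ := by
  have hsplit : ∀ u ∈ A, ∀ v ∈ B, (binVal u : ZMod p) * 2 ^ e + binVal v = c := fun u hu v hv => by
    simpa [binVal_append, hB v hv] using h u hu v hv
  have hunit : IsUnit ((2 : ZMod p) ^ e) :=
    ((ZMod.isUnit_iff_coprime 2 p).2 (Nat.coprime_comm.1 hp.coprime_two_right)).pow e
  refine ⟨fun u hu => hunit.mul_right_cancel ?_, fun v hv => ?_⟩
  · exact add_right_cancel ((hsplit u hu v₀ hv₀).trans (hsplit u₀ hu₀ v₀ hv₀).symm)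
  · exact add_left_cancel ((hsplit u₀ hu₀ v hv).trans (hsplit u₀ hu₀ v₀ hv₀).symm)

/-- The count satisfied by a log-product of degree `d` with `N` words, all in one residue class:
`β` is the number of its factors of a length `e` with `2 ^ e ≥ p`, each of which at most doubles
the degree and has at most `2 ^ (e + 1) / p` words, and `x` is the total length of the other
factors, which have at most one word each. -/
def LogProdCountBound (p N d : ℕ) : Prop :=
  ∃ x β : ℕ, 1 ≤ x ∧ d ≤ 2 ^ β * x ∧ N * p ^ β * 2 ^ x ≤ 2 ^ (d + β)

namespace LogProdCountBound
variable {p N N₁ N₂ d d₁ d₂ : ℕ}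

lemma one (p : ℕ) : LogProdCountBound p 1 1 := ⟨1, 0, le_rfl, by norm_num, by norm_num⟩

lemma mono (h : LogProdCountBound p N d) {N' : ℕ} (hN : N' ≤ N) : LogProdCountBound p N' d := by
  obtain ⟨x, β, hx, hd, hN'⟩ := h
  exact ⟨x, β, hx, hd, le_trans (by gcongr) hN'⟩

lemma mul (h : LogProdCountBound p N₁ d₁) (hN₂ : N₂ ≤ 2 ^ d₂ / p + 1) (hd : d₂ ≤ d₁) :
    LogProdCountBound p (N₁ * N₂) (d₁ + d₂) := by
  obtain ⟨x, β, hx, hd₁, hN₁⟩ := h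
  rcases lt_or_ge (2 ^ d₂) p with hshort | hlong
  · have hN₂ : N₂ ≤ 1 := by rwa [Nat.div_eq_of_lt hshort] at hN₂
    refine ⟨x + d₂, β, by omega, ?_, ?_⟩
    · calc d₁ + d₂ ≤ 2 ^ β * x + 2 ^ β * d₂ := by
            gcongr; exact Nat.le_mul_of_pos_left d₂ (Nat.two_pow_pos β)
        _ = 2 ^ β * (x + d₂) := by ring
    · calc N₁ * N₂ * p ^ β * 2 ^ (x + d₂) ≤ N₁ * 1 * p ^ β * 2 ^ (x + d₂) := by gcongr
        _ = N₁ * p ^ β * 2 ^ x * 2 ^ d₂ := by ring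
        _ ≤ 2 ^ (d₁ + β) * 2 ^ d₂ := by gcongr
        _ = 2 ^ (d₁ + d₂ + β) := by ring
  · have hN₂ : N₂ * p ≤ 2 ^ (d₂ + 1) := by
      have := Nat.div_mul_le_self (2 ^ d₂) p
      calc N₂ * p ≤ (2 ^ d₂ / p + 1) * p := by gcongr
        _ ≤ 2 ^ (d₂ + 1) := by rw [pow_succ]; linarith
    refine ⟨x, β + 1, hx, by rw [pow_succ]; nlinarith, ?_⟩
    calc N₁ * N₂ * p ^ (β + 1) * 2 ^ x = N₁ * p ^ β * 2 ^ x * (N₂ * p) := by ring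
      _ ≤ 2 ^ (d₁ + β) * 2 ^ (d₂ + 1) := by gcongr
      _ = 2 ^ (d₁ + d₂ + (β + 1)) := by ring

end LogProdCountBound

namespace RE
variable {α : Type}

lemma lang_nonempty : ∀ r : RE α, r.lang.Nonempty
  | eps => ⟨[], rfl⟩
  | char a => ⟨[a], rfl⟩
  | union r _ => (lang_nonempty r).mono fun _ => Or.inl
  | cat r s => (lang_nonempty r).image2 (lang_nonempty s)

lemma lang_finite : ∀ r : RE α, r.lang.Finite
  | eps => Set.finite_singleton []
  | char a => Set.finite_singleton [a]
  | union r s => (lang_finite r).union (lang_finite s)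
  | cat r s => (lang_finite r).image2 _ (lang_finite s)

lemma homog_cat {r s : RE α} {d₁ d₂ : ℕ} (hr : r.Homog d₁) (hs : s.Homog d₂) :
    (cat r s).Homog (d₁ + d₂) := by
  rintro _ ⟨u, hu, v, hv, rfl⟩
  rw [List.length_append, hr u hu, hs v hv]

lemma exists_homog_of_homog_cat {r s : RE α} {d : ℕ} (h : (cat r s).Homog d) :
    ∃ d₁ d₂, d₁ + d₂ = d ∧ r.Homog d₁ ∧ s.Homog d₂ := by
  obtain ⟨u₀, hu₀⟩ := lang_nonempty r
  obtain ⟨v₀, hv₀⟩ := lang_nonempty s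
  have hlen : ∀ u ∈ r.lang, ∀ v ∈ s.lang, u.length + v.length = d := fun u hu v hv => by
    simpa using h (u ++ v) ⟨u, hu, v, hv, rfl⟩
  refine ⟨u₀.length, v₀.length, hlen u₀ hu₀ v₀ hv₀, fun u hu => ?_, fun v hv => ?_⟩
  · have := hlen u hu v₀ hv₀; have := hlen u₀ hu₀ v₀ hv₀; omega
  · have := hlen u₀ hu₀ v hv; have := hlen u₀ hu₀ v₀ hv₀; omega

theorem exists_logProd_cover (r : RE α) {d : ℕ} (hd : 1 ≤ d) (h : r.Homog d) :
    ∃ Ps : List (RE α), Ps.length ≤ r.size ∧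
      (∀ P ∈ Ps, P.LogProd ∧ P.Homog d ∧ ∀ w ∈ P.lang, w ∈ r.lang) ∧
      ∀ w ∈ r.lang, ∃ P ∈ Ps, w ∈ P.lang := by
  induction r generalizing d with
  | eps => have := h [] rfl; simp at this; omega
  | char a =>
    refine ⟨[char a], le_rfl, ?_, ?_⟩ <;> simp [LogProd.char a, h]
  | union r s ihr ihs =>
    obtain ⟨Ps, hPs, hP, hr⟩ := ihr hd fun w hw => h w (Or.inl hw)
    obtain ⟨Qs, hQs, hQ, hs⟩ := ihs hd fun w hw => h w (Or.inr hw)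
    refine ⟨Ps ++ Qs, by simp only [List.length_append, size]; omega, fun P hPQ => ?_, ?_⟩
    · rcases List.mem_append.1 hPQ with hPQ | hPQ
      · obtain ⟨hlp, hhom, hsub⟩ := hP P hPQ
        exact ⟨hlp, hhom, fun w hw => Or.inl (hsub w hw)⟩
      · obtain ⟨hlp, hhom, hsub⟩ := hQ P hPQ
        exact ⟨hlp, hhom, fun w hw => Or.inr (hsub w hw)⟩
    · rintro w (hw | hw)
      · obtain ⟨P, hP, hwP⟩ := hr w hw
        exact ⟨P, List.mem_append_left _ hP, hwP⟩
      · obtain ⟨P, hP, hwP⟩ := hs w hw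
        exact ⟨P, List.mem_append_right _ hP, hwP⟩
  | cat r s ihr ihs =>
    obtain ⟨d₁, d₂, rfl, hr, hs⟩ := exists_homog_of_homog_cat h
    rcases le_total d₂ d₁ with hle | hle
    · obtain ⟨Ps, hPs, hP, hcov⟩ := ihr (by omega) hr
      refine ⟨Ps.map (cat · s), by simp only [List.length_map, size]; omega, ?_, ?_⟩
      · simp only [List.mem_map]
        rintro _ ⟨P, hP', rfl⟩
        obtain ⟨hlp, hhom, hsub⟩ := hP P hP'
        refine ⟨.catL hlp hhom hs hle, homog_cat hhom hs, ?_⟩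
        rintro _ ⟨u, hu, v, hv, rfl⟩
        exact ⟨u, hsub u hu, v, hv, rfl⟩
      · rintro _ ⟨u, hu, v, hv, rfl⟩
        obtain ⟨P, hP', huP⟩ := hcov u hu
        exact ⟨cat P s, List.mem_map_of_mem hP', u, huP, v, hv, rfl⟩
    · obtain ⟨Ps, hPs, hP, hcov⟩ := ihs (by omega) hs
      refine ⟨Ps.map (cat r ·), by simp only [List.length_map, size]; omega, ?_, ?_⟩
      · simp only [List.mem_map]
        rintro _ ⟨P, hP', rfl⟩
        obtain ⟨hlp, hhom, hsub⟩ := hP P hP'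
        refine ⟨.catR hlp hhom hr hle, homog_cat hr hhom, ?_⟩
        rintro _ ⟨u, hu, v, hv, rfl⟩
        exact ⟨u, hu, v, hsub v hv, rfl⟩
      · rintro _ ⟨u, hu, v, hv, rfl⟩
        obtain ⟨P, hP', hvP⟩ := hcov v hv
        exact ⟨cat r P, List.mem_map_of_mem hP', u, hu, v, hvP, rfl⟩

lemma Homog.eq {r : RE α} {d d' : ℕ} (h : r.Homog d) (h' : r.Homog d') : d = d' := by
  obtain ⟨w, hw⟩ := lang_nonempty r
  exact (h w hw).symm.trans (h' w hw)

lemma ncard_lang_le_of_binVal_eq {p : ℕ} [NeZero p] {B : RE Bool} {e : ℕ} (hB : B.Homog e)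
    {c : ZMod p} (hc : ∀ v ∈ B.lang, (binVal v : ZMod p) = c) :
    B.lang.ncard ≤ 2 ^ e / p + 1 :=
  (Set.ncard_le_ncard (t := residueWords p e c) (fun v hv => ⟨hB v hv, hc v hv⟩)
    ((List.finite_length_eq Bool e).subset fun _ hv => hv.1)).trans
    (ncard_residueWords_le p e c)

theorem LogProd.countBound {p : ℕ} (hp : Odd p) {P : RE Bool} (hP : P.LogProd) {d : ℕ}
    {c : ZMod p} (hd : P.Homog d) (hc : ∀ w ∈ P.lang, (binVal w : ZMod p) = c) :
    LogProdCountBound p P.lang.ncard d := by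
  have : NeZero p := ⟨hp.pos.ne'⟩
  induction hP generalizing d c with
  | char a =>
    obtain rfl : d = 1 := (hd [a] rfl).symm
    exact (Set.ncard_singleton [a]).symm ▸ LogProdCountBound.one p
  | @catL B₁ B₂ d₁ d₂ _ h₁ h₂ hle ih =>
    obtain rfl := hd.eq (homog_cat h₁ h₂)
    obtain ⟨u₀, hu₀⟩ := lang_nonempty B₁
    obtain ⟨v₀, hv₀⟩ := lang_nonempty B₂
    obtain ⟨hc₁, hc₂⟩ := binVal_cast_eq_of_append hp h₂
      (fun u hu v hv => hc _ ⟨u, hu, v, hv, rfl⟩) hu₀ hv₀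
    exact ((ih h₁ hc₁).mul (ncard_lang_le_of_binVal_eq h₂ hc₂) hle).mono
      (Set.ncard_image2_le _ (lang_finite B₁) (lang_finite B₂))
  | @catR B₁ B₂ d₁ d₂ _ h₁ h₂ hle ih =>
    obtain rfl := hd.eq (homog_cat h₂ h₁)
    obtain ⟨u₀, hu₀⟩ := lang_nonempty B₁
    obtain ⟨v₀, hv₀⟩ := lang_nonempty B₂
    obtain ⟨hc₂, hc₁⟩ := binVal_cast_eq_of_append hp h₁
      (fun v hv u hu => hc _ ⟨v, hv, u, hu, rfl⟩) hv₀ hu₀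
    rw [add_comm]
    exact ((ih h₁ hc₁).mul (ncard_lang_le_of_binVal_eq h₂ hc₂) hle).mono
      ((Set.ncard_image2_le _ (lang_finite B₂) (lang_finite B₁)).trans_eq (mul_comm _ _))

end RE

lemma mul_rpow_logb_le_two_pow_mul {n p x β : ℕ} (hp : 2 < p) (hn : 1 ≤ n) (hx : 1 ≤ x)
    (hβ : n ≤ 2 ^ β * x) :
    (p : ℝ) * ((n : ℝ)⁻¹ * (p : ℝ) ^ (Real.logb 2 ((n : ℝ) / Real.logb 2 p) - 2)) ≤
      2 ^ x * ((p : ℝ) / 2) ^ β := by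
  have hp₀ : (0 : ℝ) < p := by positivity
  have hn₀ : (0 : ℝ) < n := by positivity
  have hx₀ : (0 : ℝ) < x := by positivity
  set ℓ := Real.logb 2 (p : ℝ)
  have hℓ : 1 < ℓ := by
    rw [← Real.logb_self_eq_one one_lt_two]
    exact Real.logb_lt_logb one_lt_two two_pos (by exact_mod_cast hp)
  have hn_le : Real.logb 2 n ≤ β + Real.logb 2 x := by
    have := Real.logb_le_logb_of_le one_lt_two hn₀ (show (n : ℝ) ≤ 2 ^ β * x by exact_mod_cast hβ)
    rwa [Real.logb_mul (by positivity) hx₀.ne', Real.logb_pow, Real.logb_self_eq_one one_lt_two,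
      mul_one] at this
  have hx_le : ℓ * (Real.logb 2 x - Real.logb 2 ℓ - 1) ≤ x := by
    have hz : (0 : ℝ) < x / (2 * ℓ) := by positivity
    have h := mul_le_mul_of_nonneg_left (Real.logb_two_le_two_mul hz) (by positivity : 0 ≤ ℓ)
    rw [Real.logb_div hx₀.ne' (by positivity), Real.logb_mul two_ne_zero (by positivity),
      Real.logb_self_eq_one one_lt_two] at h
    field_simp at h
    linarith
  have hx_nonneg : 0 ≤ Real.logb 2 x := Real.logb_nonneg one_lt_two (by exact_mod_cast hx)
  -- In base-2 logarithms the claim reads `(ℓ - 1) log n ≤ ℓ log ℓ + ℓ + x + (ℓ - 1) β`.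
  rw [← Real.logb_le_logb one_lt_two (by positivity) (by positivity), Real.logb_mul hp₀.ne'
    (by positivity), Real.logb_mul (by positivity) (by positivity), Real.logb_inv,
    Real.logb_rpow_eq_mul_logb_of_pos hp₀, Real.logb_div hn₀.ne' (by positivity),
    Real.logb_mul (by positivity) (by positivity), Real.logb_pow, Real.logb_pow,
    Real.logb_div hp₀.ne' two_ne_zero, Real.logb_self_eq_one one_lt_two]
  linarith [mul_le_mul_of_nonneg_left hn_le (by linarith : 0 ≤ ℓ - 1)]

lemma LogProdCountBound.mul_rpow_logb_le {p N n : ℕ} (h : LogProdCountBound p N n) (hp : 2 < p)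
    (hn : 1 ≤ n) :
    (N : ℝ) * ((n : ℝ)⁻¹ * (p : ℝ) ^ (Real.logb 2 ((n : ℝ) / Real.logb 2 p) - 2)) ≤
      2 ^ n / p := by
  obtain ⟨x, β, hx, hβ, hN⟩ := h
  set T := (n : ℝ)⁻¹ * (p : ℝ) ^ (Real.logb 2 ((n : ℝ) / Real.logb 2 p) - 2)
  have hN' : (N : ℝ) * p ^ β * 2 ^ x ≤ 2 ^ n * 2 ^ β := by rw [← pow_add]; exact_mod_cast hN
  rw [le_div_iff₀ (by positivity)]
  calc (N : ℝ) * T * p = N * (p * T) := by ring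
    _ ≤ N * (2 ^ x * ((p : ℝ) / 2) ^ β) :=
      mul_le_mul_of_nonneg_left (mul_rpow_logb_le_two_pow_mul hp hn hx hβ) N.cast_nonneg
    _ = N * p ^ β * 2 ^ x / 2 ^ β := by rw [div_pow]; ring
    _ ≤ 2 ^ n := by rw [div_le_iff₀ (by positivity)]; exact hN'

/-- Lower bound for the divisibility language: for odd `p > 2`, every regular
expression describing `L = {w ∈ {0,1}^n : bin(w) ≡ 0 (mod p)}` has length at
least `Ω(n⁻¹ · p^{log₂(n / log₂ p) − 2})`. -/
theorem divisibility_lower_bound :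
    ∃ C : ℝ, 0 < C ∧
      ∀ (n p : ℕ), Odd p → 2 < p → 1 ≤ n →
        ∀ r : RE Bool,
          (∀ w, w ∈ r.lang ↔ (w.length = n ∧ binVal w % p = 0)) →
          C * ((n : ℝ)⁻¹ *
              (p : ℝ) ^ (Real.logb 2 ((n : ℝ) / Real.logb 2 (p : ℝ)) - 2)) ≤
            (r.size : ℝ) := by
  refine ⟨1, one_pos, fun n p hodd hp hn r hr => ?_⟩
  have : NeZero p := ⟨by omega⟩
  set T := (n : ℝ)⁻¹ * (p : ℝ) ^ (Real.logb 2 ((n : ℝ) / Real.logb 2 p) - 2)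
  have hT : 0 < T := by positivity
  have hlang : r.lang = residueWords p n 0 := Set.ext fun w => (hr w).trans <| by
    simp [residueWords, ZMod.natCast_eq_zero_iff, Nat.dvd_iff_mod_eq_zero]
  obtain ⟨Ps, hlen, hPs, hcov⟩ := r.exists_logProd_cover hn fun w hw => ((hr w).1 hw).1
  have hP : ∀ P ∈ Ps, (P.lang.ncard : ℝ) ≤ 2 ^ n / p / T := fun P hPmem => by
    obtain ⟨hlog, hhom, hsub⟩ := hPs P hPmem
    have hbound := hlog.countBound hodd hhom fun w hw => (hlang ▸ hsub w hw).2
    rw [le_div_iff₀ hT]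
    exact hbound.mul_rpow_logb_le hp hn
  have hcount := List.ncard_le_length_mul RE.lang (fun P _ => P.lang_finite) hP hcov
  rw [hlang] at hcount
  have hA : (0 : ℝ) < 2 ^ n / p := by positivity
  have hsize : (2 : ℝ) ^ n / p ≤ r.size * (2 ^ n / p / T) :=
    (div_le_ncard_residueWords_zero p n).trans (hcount.trans (by gcongr))
  rw [← mul_div_assoc, le_div_iff₀ hT, mul_comm (r.size : ℝ)] at hsize
  rw [one_mul]
  exact le_of_mul_le_mul_left hsize hA
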